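/- arXiv:1604.06755 — 3 statements merged into one kernel-verified Lean document; each statement's English description precedes it below -/
import Mathlib

section
/- Let m be a positive integer and let A = (a_0, …, a_i) be a finite sequence of positive integers with i ≥ 1. If A is an m-palindrome, then m·[a_i, …, a_1] = [a_0, …, a_{i−1}]. -/
/-- Value of a finite continued fraction `[a₀, a₁, …, a_i] = a₀ + 1/(a₁ + 1/(⋯ + 1/a_i))`. -/
noncomputable def cfVal : List ℕ → ℝ
  | [] => 0
  | [a] => (a : ℝ)
  | a :: b :: rest => (a : ℝ) + 1 / cfVal (b :: rest)

/-- `A` is an `m`-palindrome: `[A] = m·[Ã]`, where `Ã` is the reversal of `A`. -/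
def IsMPal (m : ℕ) (A : List ℕ) : Prop := cfVal A = (m : ℝ) * cfVal A.reverse

/-- The prefix `(a₀, …, a_i)` of an infinite sequence of partial quotients. -/
def cfPrefix (a : ℕ → ℕ) (i : ℕ) : List ℕ := (List.range (i + 1)).map a

/-- Continuant numerators, index-shifted: `contP a (k+1) = p_k`, `contP a 0 = p₋₁ = 1`. -/
def contP (a : ℕ → ℕ) : ℕ → ℤ
  | 0 => 1
  | 1 => (a 0 : ℤ)
  | (k+2) => (a (k+1) : ℤ) * contP a (k+1) + contP a k

/-- Continuant denominators, index-shifted: `contQ a (k+1) = q_k`, `contQ a 0 = q₋₁ = 0`. -/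
def contQ (a : ℕ → ℕ) : ℕ → ℤ
  | 0 => 0
  | 1 => 1
  | (k+2) => (a (k+1) : ℤ) * contQ a (k+1) + contQ a k

/-- Concatenation of `k` copies of the finite sequence `A`. -/
def listPow (A : List ℕ) (k : ℕ) : List ℕ := (List.replicate k A).flatten

/-- `x` is a quadratic irrational. -/
def IsQuadraticIrrational (x : ℝ) : Prop :=
  Irrational x ∧ ∃ a b c : ℤ, a ≠ 0 ∧ (a : ℝ) * x ^ 2 + (b : ℝ) * x + (c : ℝ) = 0

/-- `x` is a reduced quadratic irrational: `x > 1` and its algebraic (Galois) conjugate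
lies strictly between `-1` and `0`. -/
def IsReducedQuadIrr (x : ℝ) : Prop :=
  Irrational x ∧ 1 < x ∧
    ∃ a b c : ℤ, a ≠ 0 ∧ (a : ℝ) * x ^ 2 + (b : ℝ) * x + (c : ℝ) = 0 ∧
      ∀ y : ℝ, y ≠ x → (a : ℝ) * y ^ 2 + (b : ℝ) * y + (c : ℝ) = 0 → -1 < y ∧ y < 0

/-- `x` and `y` are equivalent: `x = (a + b·y)/(c + d·y)` for integers with `ad - bc = ±1`. -/
def RealEquiv (x y : ℝ) : Prop :=
  ∃ a b c d : ℤ, (a * d - b * c = 1 ∨ a * d - b * c = -1) ∧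
    ((c : ℝ) + (d : ℝ) * y ≠ 0) ∧ x = ((a : ℝ) + (b : ℝ) * y) / ((c : ℝ) + (d : ℝ) * y)

/-!
With the continuant `K`, a continued fraction with positive entries has value
`[L] = K(L) / K(tail L)`, and `K` is invariant under reversal, so `[L̃] = K(L) / K(dropLast L)`.
Hence `L` is an `m`-palindrome exactly when `K(dropLast L) = m · K(tail L)`. Both sides of the
identity have the continuant of the interior of `L` as denominator, with numerators
`m · K(tail L)` and `K(dropLast L)`.
-/

-- The empty continuant is `1`, so that the recurrence also covers lists of length two.
def continuant : List ℕ → ℕ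
  | [] => 1
  | [a] => a
  | a :: b :: rest => a * continuant (b :: rest) + continuant rest

theorem continuant_pos {L : List ℕ} (hL : ∀ x ∈ L, 0 < x) : 0 < continuant L := by
  induction L using continuant.induct with
  | case1 => simp [continuant]
  | case2 a => simpa [continuant] using hL
  | case3 a b rest ih₁ ih₂ =>
    have hrest := ih₁ fun x hx => hL x (by simp [hx])
    have ha := hL a (by simp)
    simp only [continuant]
    positivity

theorem continuant_append_pair (L : List ℕ) (x y : ℕ) :
    continuant (L ++ [x, y]) = y * continuant (L ++ [x]) + continuant L := by
  induction L using continuant.induct with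
  | case1 => simp [continuant, mul_comm]
  | case2 a =>
    simp only [List.cons_append, List.nil_append, continuant]
    ring
  | case3 a b rest ih₁ ih₂ =>
    have h : continuant (a :: b :: rest ++ [x]) =
        a * continuant (b :: rest ++ [x]) + continuant (rest ++ [x]) := by
      cases rest <;> rfl
    rw [List.cons_append, List.cons_append, continuant, ← List.cons_append, ih₁, ih₂, h]
    simp only [continuant]
    ring

theorem continuant_reverse (L : List ℕ) : continuant L.reverse = continuant L := by
  induction L using continuant.induct with
  | case1 => rfl
  | case2 a => rfl
  | case3 a b rest ih₁ ih₂ =>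
    rw [List.reverse_cons, List.reverse_cons, List.append_assoc, List.singleton_append,
      continuant_append_pair, ← List.reverse_cons, ih₁, ih₂, continuant]

theorem cfVal_eq_continuant_div {L : List ℕ} (hne : L ≠ []) (hL : ∀ x ∈ L, 0 < x) :
    cfVal L = continuant L / continuant L.tail := by
  induction L using continuant.induct with
  | case1 => exact absurd rfl hne
  | case2 a => simp [cfVal, continuant]
  | case3 a b rest ih₁ ih₂ =>
    have hpos : (0 : ℝ) < continuant (b :: rest) := by
      exact_mod_cast continuant_pos fun x hx => hL x (by simp [hx])
    rw [cfVal, ih₁ (List.cons_ne_nil _ _) fun x hx => hL x (by simp [hx])]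
    simp only [continuant, List.tail_cons, Nat.cast_add, Nat.cast_mul]
    field_simp

theorem cfVal_reverse_eq_continuant_div {L : List ℕ} (hne : L ≠ []) (hL : ∀ x ∈ L, 0 < x) :
    cfVal L.reverse = continuant L / continuant L.dropLast := by
  rw [cfVal_eq_continuant_div (List.reverse_ne_nil_iff.mpr hne) (by simpa using hL),
    continuant_reverse, List.tail_reverse, continuant_reverse]

theorem IsMPal.continuant_dropLast {m : ℕ} {L : List ℕ} (h : IsMPal m L) (hne : L ≠ [])
    (hL : ∀ x ∈ L, 0 < x) : continuant L.dropLast = m * continuant L.tail := by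
  have hK : (0 : ℝ) < continuant L := mod_cast continuant_pos hL
  have hT : (0 : ℝ) < continuant L.tail :=
    mod_cast continuant_pos fun x hx => hL x (List.mem_of_mem_tail hx)
  have hD : (0 : ℝ) < continuant L.dropLast :=
    mod_cast continuant_pos fun x hx => hL x (List.dropLast_subset L hx)
  rw [IsMPal, cfVal_eq_continuant_div hne hL, cfVal_reverse_eq_continuant_div hne hL] at h
  field_simp at h
  exact_mod_cast h.trans (mul_comm _ _)

theorem IsMPal.mul_cfVal_tail_reverse {m : ℕ} {L : List ℕ} (h : IsMPal m L)
    (hL : ∀ x ∈ L, 0 < x) : m * cfVal L.tail.reverse = cfVal L.dropLast := by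
  rcases eq_or_ne L.tail [] with ht | ht
  · have hd : L.dropLast = [] := by
      rw [← List.length_eq_zero_iff, List.length_dropLast, ← List.length_tail, ht]; rfl
    simp [ht, hd, cfVal]
  have hne : L ≠ [] := by rintro rfl; exact ht rfl
  have hT : ∀ x ∈ L.tail, 0 < x := fun x hx => hL x (List.mem_of_mem_tail hx)
  have hD : ∀ x ∈ L.dropLast, 0 < x := fun x hx => hL x (List.dropLast_subset L hx)
  have hd : L.dropLast ≠ [] := by
    rwa [← List.length_pos_iff, List.length_dropLast, ← List.length_tail, List.length_pos_iff]
  rw [cfVal_reverse_eq_continuant_div ht hT, cfVal_eq_continuant_div hd hD, List.tail_dropLast,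
    h.continuant_dropLast hne hL]
  push_cast
  ring

theorem cfPrefix_pos {a : ℕ → ℕ} {i : ℕ} (ha : ∀ k, k ≤ i → 0 < a k) :
    ∀ x ∈ cfPrefix a i, 0 < x := by
  simp only [cfPrefix, List.mem_map, List.mem_range]
  rintro _ ⟨k, hk, rfl⟩
  exact ha k (by omega)

theorem cfPrefix_dropLast (a : ℕ → ℕ) (i : ℕ) :
    (cfPrefix a i).dropLast = (List.range i).map a := by
  simp [cfPrefix, List.range_succ]

theorem cfPrefix_tail_reverse (a : ℕ → ℕ) (i : ℕ) :
    (cfPrefix a i).tail.reverse = (List.range i).map (fun k => a (i - k)) := by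
  apply List.ext_getElem (by simp [cfPrefix])
  intro j _ hj
  rw [List.length_map, List.length_range] at hj
  simp only [List.getElem_map, List.getElem_range, cfPrefix, List.range_succ_eq_map,
    List.map_cons, List.map_map, List.tail_cons, List.getElem_reverse, List.length_map,
    List.length_range, Function.comp_apply, Nat.succ_eq_add_one]
  congr 1
  omega

theorem m_palindrome_interior_identity_general
    (m : ℕ) (a : ℕ → ℕ) (i : ℕ)
    (ha : ∀ k, k ≤ i → 0 < a k) (h : IsMPal m (cfPrefix a i)) :
    (m : ℝ) * cfVal ((List.range i).map (fun k => a (i - k))) =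
      cfVal ((List.range i).map a) := by
  rw [← cfPrefix_tail_reverse, ← cfPrefix_dropLast]
  exact h.mul_cfVal_tail_reverse (cfPrefix_pos ha)

theorem m_palindrome_interior_identity
    (m : ℕ) (hm : 0 < m) (a : ℕ → ℕ) (i : ℕ) (hi : 1 ≤ i)
    (ha : ∀ k, k ≤ i → 0 < a k) (h : IsMPal m (cfPrefix a i)) :
    (m : ℝ) * cfVal ((List.range i).map (fun k => a (i - k))) =
      cfVal ((List.range i).map a) :=
  m_palindrome_interior_identity_general m a i ha h
end

section
/- Let m be a positive integer, let α = [a_0, a_1, a_2, …] be an irrational continued fraction whose partial quotients are all positive integers, and let p_k, q_k denote the continuants of its prefixes. If i ≥ 1 is an index such that the prefix (a_0, …, a_i) is an m-palindrome (equivalently, m·q_i = p_{i−1}), then |α² − m·p_i/q_{i−1}| < (1 + 3α)/q_{i−1}². -/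
/-!
Products of the matrices `!![x, 1; 1, 0]` encode continued fractions: the product over
`(a₀, …, a_i)` is `!![p_i, p_{i-1}; q_i, q_{i-1}]`, so `[a₀, …, a_i] = p_i / q_i` and, taking
transposes, `[a_i, …, a₀] = p_i / p_{i-1}`. Hence `(a₀, …, a_i)` is an `m`-palindrome exactly when
`p_{i-1} = m q_i`, and then `m p_i / q_{i-1} = (p_{i-1} / q_{i-1}) (p_i / q_i) = u v` is a product of
two consecutive convergents. The convergents alternate around `α` with gaps `1 / (q_k q_{k+1})`, so
`u` and `v` both lie within `δ = 1 / q_{i-1}²` of `α`, and `α² - u v = α (α - u) + u (α - v)` is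
at most `(2α + 1) δ` in absolute value.
-/

open Matrix Filter Topology Set

def cfMat (x : ℕ) : Matrix (Fin 2) (Fin 2) ℤ := !![(x : ℤ), 1; 1, 0]

def cfMatProd (L : List ℕ) : Matrix (Fin 2) (Fin 2) ℤ := (L.map cfMat).prod

section CfMatProd

@[simp]
lemma cfMatProd_nil : cfMatProd [] = 1 := rfl

@[simp]
lemma cfMatProd_cons (x : ℕ) (L : List ℕ) : cfMatProd (x :: L) = cfMat x * cfMatProd L := by
  simp [cfMatProd]

@[simp]
lemma cfMatProd_append (L M : List ℕ) : cfMatProd (L ++ M) = cfMatProd L * cfMatProd M := by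
  simp [cfMatProd]

lemma cfMatProd_reverse (L : List ℕ) : cfMatProd L.reverse = (cfMatProd L)ᵀ := by
  induction L with
  | nil => simp
  | cons x L ih =>
    have hsymm : (cfMat x)ᵀ = cfMat x := by
      ext i j; fin_cases i <;> fin_cases j <;> rfl
    simp [ih, transpose_mul, hsymm]

lemma det_cfMatProd (L : List ℕ) : (cfMatProd L).det = (-1) ^ L.length := by
  induction L with
  | nil => simp
  | cons x L ih =>
    rw [cfMatProd_cons, det_mul, ih]
    simp [cfMat, det_fin_two_of, pow_succ']

lemma cfMatProd_cons_apply_zero_zero (x : ℕ) (L : List ℕ) :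
    cfMatProd (x :: L) 0 0 = x * cfMatProd L 0 0 + cfMatProd L 1 0 := by
  simp [cfMat, mul_apply, Fin.sum_univ_two]

lemma cfMatProd_cons_apply_one_zero (x : ℕ) (L : List ℕ) :
    cfMatProd (x :: L) 1 0 = cfMatProd L 0 0 := by
  simp [cfMat, mul_apply, Fin.sum_univ_two]

lemma cfMatProd_apply_bounds {L : List ℕ} (hL : ∀ x ∈ L, 0 < x) :
    1 ≤ cfMatProd L 0 0 ∧ 0 ≤ cfMatProd L 1 0 ∧ cfMatProd L 1 0 ≤ cfMatProd L 0 0 := by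
  induction L with
  | nil => simp
  | cons x L ih =>
    obtain ⟨h00, h10, hle⟩ := ih fun y hy => hL y (List.mem_cons_of_mem _ hy)
    have hx : (1 : ℤ) ≤ x := by exact_mod_cast hL x List.mem_cons_self
    rw [cfMatProd_cons_apply_zero_zero, cfMatProd_cons_apply_one_zero]
    exact ⟨by nlinarith, by linarith, by nlinarith⟩

lemma cfVal_eq_cfMatProd {L : List ℕ} (hL : ∀ x ∈ L, 0 < x) (hne : L ≠ []) :
    cfVal L = (cfMatProd L 0 0 : ℝ) / (cfMatProd L 1 0 : ℝ) := by
  match L, hL, hne with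
  | [x], _, _ => simp [cfVal, cfMat]
  | x :: y :: rest, hL, _ =>
    have hy : ∀ z ∈ y :: rest, 0 < z := fun z hz => hL z (List.mem_cons_of_mem _ hz)
    have hpos : (0 : ℝ) < cfMatProd (y :: rest) 0 0 := by
      exact_mod_cast (cfMatProd_apply_bounds hy).1
    rw [cfVal, cfVal_eq_cfMatProd hy (List.cons_ne_nil _ _), cfMatProd_cons_apply_zero_zero x,
      cfMatProd_cons_apply_one_zero x]
    push_cast
    field_simp

end CfMatProd

section Continuants

variable {a : ℕ → ℕ}

lemma cfPrefix_succ (a : ℕ → ℕ) (k : ℕ) : cfPrefix a (k + 1) = cfPrefix a k ++ [a (k + 1)] := by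
  simp [cfPrefix, List.range_succ]

lemma cfMatProd_cfPrefix (a : ℕ → ℕ) (k : ℕ) :
    cfMatProd (cfPrefix a k) = !![contP a (k + 1), contP a k; contQ a (k + 1), contQ a k] := by
  induction k with
  | zero => simp [cfPrefix, cfMat, contP, contQ]
  | succ k ih =>
    rw [cfPrefix_succ, cfMatProd_append, ih, cfMatProd_cons, cfMatProd_nil, mul_one, cfMat,
      mul_fin_two, contP, contQ]
    simp only [mul_one, one_mul, mul_zero, add_zero, mul_comm (contP a (k + 1)),
      mul_comm (contQ a (k + 1))]

lemma contP_mul_contQ_sub_contP_mul_contQ (a : ℕ → ℕ) (k : ℕ) :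
    contP a (k + 1) * contQ a k - contP a k * contQ a (k + 1) = (-1) ^ (k + 1) := by
  have hdet := det_cfMatProd (cfPrefix a k)
  rw [cfMatProd_cfPrefix, det_fin_two_of] at hdet
  simpa [cfPrefix] using hdet

lemma pos_of_mem_cfPrefix (ha : ∀ k, 0 < a k) {k : ℕ} : ∀ x ∈ cfPrefix a k, 0 < x := by
  simp only [cfPrefix, List.mem_map]
  rintro _ ⟨n, -, rfl⟩
  exact ha n

lemma one_le_contP (ha : ∀ k, 0 < a k) (k : ℕ) : 1 ≤ contP a k := by
  cases k with
  | zero => rfl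
  | succ k => simpa [cfMatProd_cfPrefix] using (cfMatProd_apply_bounds (pos_of_mem_cfPrefix ha)).1

lemma contQ_le_contP (ha : ∀ k, 0 < a k) (k : ℕ) : contQ a (k + 1) ≤ contP a (k + 1) := by
  simpa [cfMatProd_cfPrefix] using (cfMatProd_apply_bounds (pos_of_mem_cfPrefix ha (k := k))).2.2

lemma contQ_mono (ha : ∀ k, 0 < a k) : Monotone (contQ a) := by
  suffices h : ∀ k, 0 ≤ contQ a k ∧ contQ a k ≤ contQ a (k + 1) from
    monotone_nat_of_le_succ fun k => (h k).2
  intro k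
  induction k with
  | zero => simp [contQ]
  | succ k ih =>
    have hk : (1 : ℤ) ≤ a (k + 1) := by exact_mod_cast ha (k + 1)
    refine ⟨by linarith, ?_⟩
    rw [show contQ a (k + 2) = a (k + 1) * contQ a (k + 1) + contQ a k from rfl]
    nlinarith

lemma one_le_contQ (ha : ∀ k, 0 < a k) (k : ℕ) : 1 ≤ contQ a (k + 1) :=
  contQ_mono ha (Nat.le_add_left 1 k)

lemma cfVal_cfPrefix (ha : ∀ k, 0 < a k) (k : ℕ) :
    cfVal (cfPrefix a k) = (contP a (k + 1) : ℝ) / contQ a (k + 1) := by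
  rw [cfVal_eq_cfMatProd (pos_of_mem_cfPrefix ha) (by simp [cfPrefix]), cfMatProd_cfPrefix]
  simp

lemma cfVal_reverse_cfPrefix (ha : ∀ k, 0 < a k) (k : ℕ) :
    cfVal (cfPrefix a k).reverse = (contP a (k + 1) : ℝ) / contP a k := by
  rw [cfVal_eq_cfMatProd (by simpa using pos_of_mem_cfPrefix ha) (by simp [cfPrefix]),
    cfMatProd_reverse, cfMatProd_cfPrefix]
  simp

lemma isMPal_cfPrefix_iff (ha : ∀ k, 0 < a k) (m k : ℕ) :
    IsMPal m (cfPrefix a k) ↔ m * contQ a (k + 1) = contP a k := by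
  have hp : (0 : ℝ) < contP a (k + 1) := by exact_mod_cast one_le_contP ha (k + 1)
  have hp' : (0 : ℝ) < contP a k := by exact_mod_cast one_le_contP ha k
  have hq : (0 : ℝ) < contQ a (k + 1) := by exact_mod_cast one_le_contQ ha k
  rw [IsMPal, cfVal_cfPrefix ha, cfVal_reverse_cfPrefix ha, ← Int.cast_inj (α := ℝ)]
  push_cast
  rw [div_eq_iff hq.ne', mul_div_assoc', div_mul_eq_mul_div, eq_div_iff hp'.ne']
  constructor <;> intro h <;> nlinarith

end Continuants

section Convergents

variable {a : ℕ → ℕ}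

noncomputable def convergent (a : ℕ → ℕ) (k : ℕ) : ℝ := (contP a (k + 1) : ℝ) / contQ a (k + 1)

lemma contQ_pos (ha : ∀ k, 0 < a k) (k : ℕ) : (0 : ℝ) < contQ a (k + 1) := by
  exact_mod_cast one_le_contQ ha k

lemma one_le_convergent (ha : ∀ k, 0 < a k) (k : ℕ) : 1 ≤ convergent a k := by
  rw [convergent, one_le_div (contQ_pos ha k)]
  exact_mod_cast contQ_le_contP ha k

lemma convergent_succ_sub (ha : ∀ k, 0 < a k) (k : ℕ) :
    convergent a (k + 1) - convergent a k =
      (-1) ^ k / ((contQ a (k + 1) : ℝ) * contQ a (k + 2)) := by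
  have hdet : ((contP a (k + 2) * contQ a (k + 1) - contP a (k + 1) * contQ a (k + 2) : ℤ) : ℝ) =
      (-1) ^ k := by
    rw [contP_mul_contQ_sub_contP_mul_contQ]; push_cast; ring
  have hq := contQ_pos ha k
  have hq' := contQ_pos ha (k + 1)
  push_cast at hdet
  rw [convergent, convergent, div_sub_div _ _ hq'.ne' hq.ne', ← hdet]
  ring

lemma mem_uIcc_of_sub_eq_neg {x y z s d e : ℝ} (hs : s = 1 ∨ s = -1) (hy : y - x = s * d)
    (hz : z - y = -(s * e)) (he : 0 ≤ e) (hed : e ≤ d) : z ∈ uIcc x y := by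
  rcases hs with rfl | rfl
  · exact mem_uIcc_of_le (by linarith) (by linarith)
  · exact mem_uIcc_of_ge (by linarith) (by linarith)

lemma convergent_add_two_mem_uIcc (ha : ∀ k, 0 < a k) (k : ℕ) :
    convergent a (k + 2) ∈ uIcc (convergent a k) (convergent a (k + 1)) := by
  have hstep := convergent_succ_sub ha k
  have hnext := convergent_succ_sub ha (k + 1)
  rw [pow_succ, mul_neg_one, neg_div, div_eq_mul_inv] at hnext
  rw [div_eq_mul_inv] at hstep
  have hq := contQ_pos ha k
  have hq₁ := contQ_pos ha (k + 1)
  have hq₂ := contQ_pos ha (k + 2)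
  refine mem_uIcc_of_sub_eq_neg (neg_one_pow_eq_or ℝ k) hstep hnext (by positivity) ?_
  gcongr <;> apply contQ_mono ha <;> omega

lemma uIcc_convergent_antitone (ha : ∀ k, 0 < a k) :
    Antitone fun k => uIcc (convergent a k) (convergent a (k + 1)) :=
  antitone_nat_of_succ_le fun k =>
    uIcc_subset_uIcc right_mem_uIcc (convergent_add_two_mem_uIcc ha k)

lemma abs_sub_convergent_le (ha : ∀ k, 0 < a k) {α : ℝ}
    (hα : Tendsto (convergent a) atTop (𝓝 α)) (k : ℕ) :
    |α - convergent a k| ≤ 1 / ((contQ a (k + 1) : ℝ) * contQ a (k + 2)) := by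
  have hmem : α ∈ uIcc (convergent a k) (convergent a (k + 1)) :=
    isClosed_Icc.mem_of_tendsto hα <| (eventually_ge_atTop k).mono fun n hn =>
      uIcc_convergent_antitone ha hn left_mem_uIcc
  have hq := contQ_pos ha k
  have hq₁ := contQ_pos ha (k + 1)
  calc |α - convergent a k| ≤ |convergent a (k + 1) - convergent a k| :=
        abs_sub_left_of_mem_uIcc hmem
    _ = 1 / ((contQ a (k + 1) : ℝ) * contQ a (k + 2)) := by
        rw [convergent_succ_sub ha, abs_div, abs_pow, abs_neg, abs_one, one_pow,
          abs_of_pos (by positivity)]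

lemma abs_sub_convergent_le_of_le (ha : ∀ k, 0 < a k) {α : ℝ}
    (hα : Tendsto (convergent a) atTop (𝓝 α)) {k n : ℕ} (hkn : k ≤ n) :
    |α - convergent a n| ≤ 1 / (contQ a (k + 1) : ℝ) ^ 2 := by
  have hq := contQ_pos ha k
  have hq' := contQ_pos ha n
  refine (abs_sub_convergent_le ha hα n).trans ?_
  rw [sq]
  gcongr <;> apply contQ_mono ha <;> omega

end Convergents

lemma abs_sq_sub_mul_lt {α u v δ : ℝ} (hα : 0 < α) (hδ : 0 < δ) (hδ₁ : δ ≤ 1)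
    (hu : |α - u| ≤ δ) (hv : |α - v| ≤ δ) : |α ^ 2 - u * v| < (1 + 3 * α) * δ := by
  have hu' : |u| ≤ α + 1 := by
    obtain ⟨hu₁, hu₂⟩ := abs_le.mp hu
    exact abs_le.mpr ⟨by linarith, by linarith⟩
  calc |α ^ 2 - u * v| = |α * (α - u) + u * (α - v)| := by ring_nf
    _ ≤ |α| * |α - u| + |u| * |α - v| := (abs_add_le _ _).trans_eq (by rw [abs_mul, abs_mul])
    _ ≤ α * δ + (α + 1) * δ := by rw [abs_of_pos hα]; gcongr
    _ < (1 + 3 * α) * δ := by nlinarith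

theorem m_palindrome_square_approximation_general
    (m : ℕ) (a : ℕ → ℕ) (ha : ∀ k, 0 < a k) (α : ℝ)
    (hα : Filter.Tendsto (fun i => cfVal (cfPrefix a i)) Filter.atTop (nhds α))
    (i : ℕ) (hi : 1 ≤ i) (hpal : IsMPal m (cfPrefix a i)) :
    |α ^ 2 - (m : ℝ) * (contP a (i + 1) : ℝ) / (contQ a i : ℝ)| <
      (1 + 3 * α) / (contQ a i : ℝ) ^ 2 := by
  obtain ⟨j, rfl⟩ := Nat.exists_eq_add_of_le' hi
  have hconv : Tendsto (convergent a) atTop (𝓝 α) := by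
    convert hα using 1
    exact funext fun k => (cfVal_cfPrefix ha k).symm
  have hα₁ : 1 ≤ α := ge_of_tendsto' hconv (one_le_convergent ha)
  have hm : (m : ℝ) * contQ a (j + 2) = contP a (j + 1) := by
    exact_mod_cast (isMPal_cfPrefix_iff ha m (j + 1)).1 hpal
  have hq : (1 : ℝ) ≤ contQ a (j + 1) := by exact_mod_cast one_le_contQ ha j
  have hδ : 1 / (contQ a (j + 1) : ℝ) ^ 2 ≤ 1 := by
    rw [div_le_one (by positivity)]
    nlinarith
  have hprod : (m : ℝ) * contP a (j + 1 + 1) / contQ a (j + 1) =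
      convergent a j * convergent a (j + 1) := by
    have hq₁ := contQ_pos ha (j + 1)
    rw [convergent, convergent, ← hm]
    field_simp
  rw [hprod, div_eq_mul_one_div]
  exact abs_sq_sub_mul_lt (by linarith) (by positivity) hδ
    (abs_sub_convergent_le_of_le ha hconv le_rfl) (abs_sub_convergent_le_of_le ha hconv j.le_succ)

theorem m_palindrome_square_approximation
    (m : ℕ) (hm : 0 < m) (a : ℕ → ℕ) (ha : ∀ k, 0 < a k) (α : ℝ)
    (hα : Filter.Tendsto (fun i => cfVal (cfPrefix a i)) Filter.atTop (nhds α))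
    (hirr : Irrational α)
    (i : ℕ) (hi : 1 ≤ i) (hpal : IsMPal m (cfPrefix a i)) :
    |α ^ 2 - (m : ℝ) * (contP a (i + 1) : ℝ) / (contQ a i : ℝ)| <
      (1 + 3 * α) / (contQ a i : ℝ) ^ 2 :=
  m_palindrome_square_approximation_general m a ha α hα i hi hpal
end

section
/- Let m be a positive integer, let A and X be finite sequences of positive integers that are both m-palindromes, and let (n_k)_{k≥1} be a sequence of positive integers. Define S_{A,k}(Y) = Y A^{n_k} Y (concatenation) and T_{A,k}(X) = S_{A,k} ∘ S_{A,k−1} ∘ ⋯ ∘ S_{A,1}(X). Then for every k ≥ 1 the sequence T_{A,k}(X) is an m-palindrome. -/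
open Matrix

section MSymm

variable {R : Type*} [CommRing R]

/-- Equivalently, `D * P = Pᵀ * D` for `D = diag(1, m)`, which explains why it is stable under
`P ↦ Q * P * Q`. -/
def IsMSymm (m : R) (P : Matrix (Fin 2) (Fin 2) R) : Prop := P 0 1 = m * P 1 0

theorem IsMSymm.one (m : R) : IsMSymm m 1 := by
  simp [IsMSymm]

theorem IsMSymm.mul_mul {m : R} {P Q : Matrix (Fin 2) (Fin 2) R}
    (hQ : IsMSymm m Q) (hP : IsMSymm m P) : IsMSymm m (Q * P * Q) := by
  simp only [IsMSymm, mul_apply, Fin.sum_univ_two] at hQ hP ⊢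
  rw [hQ, hP]
  ring

theorem IsMSymm.pow {m : R} {P : Matrix (Fin 2) (Fin 2) R} (hP : IsMSymm m P) (k : ℕ) :
    IsMSymm m (P ^ k) := by
  induction k using Nat.twoStepInduction with
  | zero => simpa using IsMSymm.one m
  | one => simpa using hP
  | more k hk _ =>
    rw [show P ^ (k + 2) = P * P ^ k * P by rw [pow_succ, pow_succ']]
    exact hP.mul_mul hk

end MSymm

section ContinuedFraction

def cfStep (a : ℕ) : Matrix (Fin 2) (Fin 2) ℤ := !![(a : ℤ), 1; 1, 0]

def cfMatrix (B : List ℕ) : Matrix (Fin 2) (Fin 2) ℤ := (B.map cfStep).prod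

@[simp]
theorem cfMatrix_nil : cfMatrix [] = 1 := rfl

theorem cfMatrix_cons (a : ℕ) (B : List ℕ) : cfMatrix (a :: B) = cfStep a * cfMatrix B := by
  simp [cfMatrix]

theorem cfMatrix_append (B C : List ℕ) : cfMatrix (B ++ C) = cfMatrix B * cfMatrix C := by
  simp [cfMatrix]

theorem cfMatrix_listPow (A : List ℕ) (k : ℕ) : cfMatrix (listPow A k) = cfMatrix A ^ k := by
  induction k with
  | zero => simp [cfMatrix, listPow]
  | succ k ih =>
    rw [pow_succ', ← ih]
    simp [cfMatrix, listPow, List.replicate_succ]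

theorem cfStep_transpose (a : ℕ) : (cfStep a)ᵀ = cfStep a := by
  ext i j
  fin_cases i <;> fin_cases j <;> rfl

theorem cfMatrix_reverse (B : List ℕ) : cfMatrix B.reverse = (cfMatrix B)ᵀ := by
  simp [cfMatrix, transpose_list_prod, List.map_reverse, Function.comp_def,
    cfStep_transpose]

theorem cfMatrix_cons_apply_one_zero (a : ℕ) (B : List ℕ) :
    cfMatrix (a :: B) 1 0 = cfMatrix B 0 0 := by
  simp [cfMatrix_cons, cfStep, mul_apply, Fin.sum_univ_two]

theorem cfMatrix_cons_apply_zero_zero (a : ℕ) (B : List ℕ) :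
    cfMatrix (a :: B) 0 0 = a * cfMatrix B 0 0 + cfMatrix B 1 0 := by
  simp [cfMatrix_cons, cfStep, mul_apply, Fin.sum_univ_two]

theorem cfMatrix_first_column_pos {B : List ℕ} (hB : ∀ x ∈ B, 0 < x) :
    0 < cfMatrix B 0 0 ∧ 0 ≤ cfMatrix B 1 0 := by
  induction B with
  | nil => simp
  | cons a B ih =>
    obtain ⟨hp, hq⟩ := ih fun x hx => hB x (List.mem_cons_of_mem a hx)
    have ha : (1 : ℤ) ≤ a := by exact_mod_cast hB a List.mem_cons_self
    rw [cfMatrix_cons_apply_zero_zero, cfMatrix_cons_apply_one_zero]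
    exact ⟨by nlinarith, hp.le⟩

theorem cfMatrix_apply_one_zero_pos {B : List ℕ} (hB : ∀ x ∈ B, 0 < x) (hne : B ≠ []) :
    0 < cfMatrix B 1 0 := by
  obtain ⟨a, B, rfl⟩ := List.exists_cons_of_ne_nil hne
  rw [cfMatrix_cons_apply_one_zero]
  exact (cfMatrix_first_column_pos fun x hx => hB x (List.mem_cons_of_mem a hx)).1

/-- Also true for `B = []`, as `1 / cfVal [] = 1 / 0 = 0`. -/
theorem cfVal_cons (a : ℕ) (B : List ℕ) : cfVal (a :: B) = a + 1 / cfVal B := by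
  cases B <;> simp [cfVal]

theorem cfVal_eq_div {B : List ℕ} (hB : ∀ x ∈ B, 0 < x) :
    cfVal B = (cfMatrix B 0 0 : ℝ) / cfMatrix B 1 0 := by
  induction B with
  | nil => simp [cfVal]
  | cons a B ih =>
    have hB' : ∀ x ∈ B, 0 < x := fun x hx => hB x (List.mem_cons_of_mem a hx)
    have hp : (cfMatrix B 0 0 : ℝ) ≠ 0 := by
      exact_mod_cast (cfMatrix_first_column_pos hB').1.ne'
    rw [cfVal_cons, ih hB', cfMatrix_cons_apply_zero_zero, cfMatrix_cons_apply_one_zero]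
    push_cast
    field_simp

theorem cfVal_reverse_eq_div {B : List ℕ} (hB : ∀ x ∈ B, 0 < x) :
    cfVal B.reverse = (cfMatrix B 0 0 : ℝ) / cfMatrix B 0 1 := by
  rw [cfVal_eq_div fun x hx => hB x (List.mem_reverse.mp hx), cfMatrix_reverse]
  rfl

theorem isMPal_iff_isMSymm_cfMatrix {m : ℕ} {B : List ℕ} (hB : ∀ x ∈ B, 0 < x) :
    IsMPal m B ↔ IsMSymm (m : ℤ) (cfMatrix B) := by
  rcases eq_or_ne B [] with rfl | hne
  · simp [IsMPal, IsMSymm, cfVal]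
  have hp : (0 : ℝ) < cfMatrix B 0 0 := by exact_mod_cast (cfMatrix_first_column_pos hB).1
  have hq : (0 : ℝ) < cfMatrix B 1 0 := by exact_mod_cast cfMatrix_apply_one_zero_pos hB hne
  have hr : (0 : ℝ) < cfMatrix B 0 1 := by
    have := cfMatrix_apply_one_zero_pos (fun x hx => hB x (List.mem_reverse.mp hx))
      (List.reverse_ne_nil_iff.mpr hne)
    rw [cfMatrix_reverse] at this
    exact_mod_cast this
  rw [IsMPal, IsMSymm, cfVal_eq_div hB, cfVal_reverse_eq_div hB, ← mul_div_assoc,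
    div_eq_div_iff hq.ne' hr.ne', mul_comm (m : ℝ), mul_assoc, mul_right_inj' hp.ne']
  norm_cast

end ContinuedFraction

theorem mem_of_mem_listPow {A : List ℕ} {k x : ℕ} (hx : x ∈ listPow A k) : x ∈ A := by
  simp only [listPow, List.mem_flatten, List.mem_replicate] at hx
  obtain ⟨_, ⟨_, rfl⟩, hx⟩ := hx
  exact hx

theorem perturbed_symmetry_m_palindrome_general
    (m : ℕ) (A X : List ℕ)
    (hApos : ∀ x ∈ A, 0 < x) (hXpos : ∀ x ∈ X, 0 < x)
    (hA : IsMPal m A) (hX : IsMPal m X)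
    (n : ℕ → ℕ)
    (T : ℕ → List ℕ) (hT0 : T 0 = X)
    (hTk : ∀ k, T (k + 1) = T k ++ listPow A (n (k + 1)) ++ T k) :
    ∀ k, 1 ≤ k → IsMPal m (T k) := by
  have hTpos : ∀ k, ∀ x ∈ T k, 0 < x := by
    intro k
    induction k with
    | zero => rwa [hT0]
    | succ k ih =>
      intro x hx
      rw [hTk, List.mem_append, List.mem_append] at hx
      rcases hx with (hx | hx) | hx
      exacts [ih x hx, hApos x (mem_of_mem_listPow hx), ih x hx]
  have hAsymm := (isMPal_iff_isMSymm_cfMatrix hApos).mp hA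
  have hTsymm : ∀ k, IsMSymm (m : ℤ) (cfMatrix (T k)) := by
    intro k
    induction k with
    | zero => rw [hT0]; exact (isMPal_iff_isMSymm_cfMatrix hXpos).mp hX
    | succ k ih =>
      rw [hTk, cfMatrix_append, cfMatrix_append, cfMatrix_listPow]
      exact ih.mul_mul (hAsymm.pow _)
  exact fun k _ => (isMPal_iff_isMSymm_cfMatrix (hTpos k)).mpr (hTsymm k)

theorem perturbed_symmetry_m_palindrome
    (m : ℕ) (hm : 0 < m) (A X : List ℕ)
    (hApos : ∀ x ∈ A, 0 < x) (hXpos : ∀ x ∈ X, 0 < x)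
    (hA : IsMPal m A) (hX : IsMPal m X)
    (n : ℕ → ℕ) (hn : ∀ k, 1 ≤ k → 0 < n k)
    (T : ℕ → List ℕ) (hT0 : T 0 = X)
    (hTk : ∀ k, T (k + 1) = T k ++ listPow A (n (k + 1)) ++ T k) :
    ∀ k, 1 ≤ k → IsMPal m (T k) :=
  perturbed_symmetry_m_palindrome_general m A X hApos hXpos hA hX n T hT0 hTk
end
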